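/- arXiv:2404.08280 — 3 statements merged into one kernel-verified Lean document; each statement's English description precedes it below -/
import Mathlib

section
/- For any α = (a_1,…,a_k) ∈ F_2^k with α ≠ 0, if t ∈ [k] is the maximum index such that a_t = 1, then f_α(n) = Ω(n^{1/t}); that is, there is a constant c > 0 such that f_α(n) ≥ c·n^{1/t} for all sufficiently large n. -/
open Filter

/-- A family `F` of subsets of `[n]` (modeled as `Fin n`) is `α`-intersecting modulo 2 for a
vector `α ∈ F_2^k` if for each `ℓ ∈ [k]`, any `ℓ` pairwise distinct members of `F`
have an intersection of cardinality congruent to `a_ℓ` modulo 2.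
Here `α ⟨ℓ-1,_⟩` denotes the coordinate `a_ℓ` (0-based indexing of a 1-based vector). -/
def IsIntersecting (k n : ℕ) (α : Fin k → ZMod 2) (F : Finset (Finset (Fin n))) : Prop :=
  ∀ (ℓ : Fin k) (S : Finset (Finset (Fin n))), S ⊆ F → S.card = ℓ.1 + 1 →
    ((S.inf id).card : ZMod 2) = α ℓ

/-- `fMax k n α` is the maximum size of an `α`-intersecting (mod 2) family of subsets of `[n]`. -/
noncomputable def fMax (k n : ℕ) (α : Fin k → ZMod 2) : ℕ :=
  sSup {m | ∃ F : Finset (Finset (Fin n)), IsIntersecting k n α F ∧ F.card = m}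

/-! For `m > t` and a set `S` of sizes, the `m` sets `{B ⊆ [m] : |B| ∈ S, i ∉ B}`, `i ∈ [m]`,
are distinct and any `ℓ` of them meet in exactly `∑_{s ∈ S} C(m - ℓ, s)` elements. When
`S ⊆ [m - t, m)` these counts vanish for `ℓ > t`, and for `ℓ ≤ t` they form, modulo 2, a
unitriangular linear system in the indicator of `S`; so `S` can be chosen to realise any `α`
with `a_ℓ = 0` for `ℓ > t`. The ground set then has at most `t m^t` points, whence
`f_α(n) ≥ m` as soon as `n ≥ t m^t`. -/

open Finset Function

theorem card_filter_powerset_card_mem {β : Type*} (X : Finset β) (S : Finset ℕ) :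
    (X.powerset.filter (·.card ∈ S)).card = ∑ s ∈ S, X.card.choose s := by
  rw [card_eq_sum_card_fiberwise (f := card)
    (s := X.powerset.filter (·.card ∈ S)) (t := S) fun B hB => (mem_filter.mp hB).2]
  refine sum_congr rfl fun s hs => ?_
  rw [← card_powersetCard, powersetCard_eq_filter, filter_filter]
  congr 1
  ext B
  simp only [mem_filter]
  constructor
  · rintro ⟨hB, -, rfl⟩; exact ⟨hB, rfl⟩
  · rintro ⟨hB, rfl⟩; exact ⟨hB, hs, rfl⟩

section GroundSet

variable {k : ℕ} {α : Fin k → ZMod 2} {β γ : Type*} [Fintype β] [DecidableEq β]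
  [Fintype γ] [DecidableEq γ]

def IsIntersectingOn (α : Fin k → ZMod 2) (F : Finset (Finset β)) : Prop :=
  ∀ (ℓ : Fin k) (S : Finset (Finset β)), S ⊆ F → S.card = ℓ.1 + 1 →
    ((S.inf id).card : ZMod 2) = α ℓ

theorem map_inf_id_eq_inf_id_map (e : β ↪ γ) {S : Finset (Finset β)} (hS : S.Nonempty) :
    (S.inf id).map e = (S.map (mapEmbedding e).toEmbedding).inf id := by
  rw [inf_map, ← inf'_eq_inf hS, ← inf'_eq_inf hS,
    apply_inf'_eq_inf'_comp hS (Finset.map e) fun A B => map_inter A B]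
  rfl

theorem IsIntersectingOn.map {F : Finset (Finset β)} (hF : IsIntersectingOn α F) (e : β ↪ γ) :
    IsIntersectingOn α (F.map (mapEmbedding e).toEmbedding) := by
  intro ℓ S' hS' hcard
  obtain ⟨S, hSF, rfl⟩ := subset_map_iff.mp hS'
  rw [card_map] at hcard
  rw [← map_inf_id_eq_inf_id_map e (card_pos.mp (by omega)), card_map]
  exact hF ℓ S hSF hcard

theorem card_le_fMax {n : ℕ} (hβ : Fintype.card β ≤ n) {F : Finset (Finset β)}
    (hF : IsIntersectingOn α F) : F.card ≤ fMax k n α := by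
  obtain ⟨e⟩ := Function.Embedding.nonempty_of_card_le (hβ.trans (Fintype.card_fin n).ge)
  refine le_csSup ⟨2 ^ n, ?_⟩ ⟨_, hF.map e, card_map _⟩
  rintro _ ⟨G, -, rfl⟩
  simpa using G.card_le_univ

theorem isIntersectingOn_image {ι : Type*} [Fintype ι] [DecidableEq ι] {A : ι → Finset β}
    (hA : Injective A)
    (h : ∀ (ℓ : Fin k) (I : Finset ι), I.card = ℓ.1 + 1 →
      ((I.inf A).card : ZMod 2) = α ℓ) :
    IsIntersectingOn α (univ.image A) := by
  intro ℓ S hS hcard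
  obtain ⟨I, -, rfl⟩ := subset_image_iff.mp hS
  rw [card_image_of_injective _ hA] at hcard
  rw [inf_image]
  exact h ℓ I hcard

end GroundSet

section Avoiding

variable {m : ℕ} (S : Finset ℕ)

abbrev SizedSubsets (m : ℕ) (S : Finset ℕ) := {B : Finset (Fin m) // B.card ∈ S}

def avoiding (i : Fin m) : Finset (SizedSubsets m S) := univ.filter fun B => i ∉ B.1

theorem card_inf_avoiding (I : Finset (Fin m)) :
    (I.inf (avoiding S)).card = ∑ s ∈ S, (m - I.card).choose s := by
  have : (I.inf (avoiding S)).map (Embedding.subtype _) =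
      (Iᶜ).powerset.filter (·.card ∈ S) := by
    ext B
    simp [avoiding, mem_inf, subset_compl_iff_disjoint_right, disjoint_right]
  rw [← card_map, this, card_filter_powerset_card_mem, card_compl, Fintype.card_fin]

theorem card_sizedSubsets : Fintype.card (SizedSubsets m S) = ∑ s ∈ S, m.choose s := by
  simpa using card_inf_avoiding S (∅ : Finset (Fin m))

theorem card_sizedSubsets_le {t : ℕ} (hS : S ⊆ Ico (m - t) m) :
    Fintype.card (SizedSubsets m S) ≤ t * m ^ t := by
  rw [card_sizedSubsets]
  calc ∑ s ∈ S, m.choose s ≤ ∑ _s ∈ S, m ^ t := sum_le_sum fun s hs => by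
        have hs := mem_Ico.mp (hS hs)
        rw [← Nat.choose_symm hs.2.le]
        exact (Nat.choose_le_pow _ _).trans (Nat.pow_le_pow_right (by omega) (by omega))
    _ = S.card * m ^ t := by rw [sum_const, smul_eq_mul]
    _ ≤ t * m ^ t := by
        gcongr
        exact (card_le_card hS).trans (by simp; omega)

variable {S} in
theorem avoiding_injective {s : ℕ} (hs : s ∈ S) (hs0 : 0 < s) (hsm : s < m) :
    Injective (avoiding (m := m) S) := by
  intro i j hij
  by_contra hne
  obtain ⟨B, hjB, hBi, hB⟩ := exists_subsuperset_card_eq (s := {j}) (t := univ.erase i) (n := s)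
    (by simpa using Ne.symm hne) (by simp; omega) (by simp; omega)
  have hB : (⟨B, hB ▸ hs⟩ : SizedSubsets m S) ∈ avoiding S i := by
    simpa [avoiding] using fun h => by simpa using hBi h
  rw [hij] at hB
  simp [avoiding] at hB
  exact hB (hjB (mem_singleton_self j))

end Avoiding

theorem exists_unitriangular_solution {R : Type*} [Ring R] (A : ℕ → ℕ → R) (b : ℕ → R)
    (lo d : ℕ) :
    ∃ x : ℕ → R, (∀ s < lo, x s = 0) ∧
      ∀ u, lo ≤ u → u < lo + d → x u + ∑ s ∈ range u, A u s * x s = b u := by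
  induction d with
  | zero => exact ⟨0, fun _ _ => rfl, fun u _ _ => by omega⟩
  | succ d ih =>
    obtain ⟨x, hx0, hx⟩ := ih
    set v := lo + d
    refine ⟨update x v (b v - ∑ s ∈ range v, A v s * x s), fun s hs => ?_,
      fun u hu huv => ?_⟩
    · rw [update_of_ne (by omega)]
      exact hx0 s hs
    have hsum : ∑ s ∈ range u, A u s * update x v (b v - ∑ s ∈ range v, A v s * x s) s
        = ∑ s ∈ range u, A u s * x s :=
      sum_congr rfl fun s hs => by rw [update_of_ne (by simp at hs; omega)]
    rw [hsum]
    rcases (by omega : u < v ∨ u = v) with h | rfl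
    · rw [update_of_ne h.ne]
      exact hx u hu h
    · rw [update_self, sub_add_cancel]

theorem ZMod.sum_filter_eq_one_eq_sum_mul {ι : Type*} (s : Finset ι) (f x : ι → ZMod 2) :
    ∑ i ∈ s.filter (x · = 1), f i = ∑ i ∈ s, f i * x i := by
  rw [sum_filter]
  refine sum_congr rfl fun i _ => ?_
  split_ifs with h
  · rw [h, mul_one]
  · rw [(by decide : ∀ y : ZMod 2, y ≠ 1 → y = 0) _ h, mul_zero]

theorem exists_choose_parity_design {m t : ℕ} (ht : 0 < t) (htm : t ≤ m) (a : ℕ → ZMod 2)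
    (ha : ∀ ℓ, t < ℓ → a ℓ = 0) :
    ∃ S ⊆ Ico (m - t) m, (a t = 1 → m - t ∈ S) ∧
      ∀ ℓ, 1 ≤ ℓ → ℓ ≤ m → ∑ s ∈ S, ((m - ℓ).choose s : ZMod 2) = a ℓ := by
  -- row `u = m - ℓ`, unknown `x s` = indicator of `s ∈ S`
  obtain ⟨x, hx0, hx⟩ := exists_unitriangular_solution (fun u s => (u.choose s : ZMod 2))
    (fun u => a (m - u)) (m - t) t
  have hsum : ∀ u < m, ∑ s ∈ range m, (u.choose s : ZMod 2) * x s
      = x u + ∑ s ∈ range u, (u.choose s : ZMod 2) * x s := by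
    intro u hu
    rw [← sum_subset (range_subset_range.mpr hu) fun s _ hs => by
      simp [Nat.choose_eq_zero_of_lt (by simpa using hs : u < s)]]
    rw [sum_range_succ, Nat.choose_self, Nat.cast_one, one_mul, add_comm]
  refine ⟨(range m).filter (x · = 1), fun s hs => ?_, fun hat => ?_, fun ℓ hℓ hℓm => ?_⟩
  · simp only [mem_filter, mem_range] at hs
    refine mem_Ico.mpr ⟨not_lt.mp fun h => ?_, hs.1⟩
    simp [hx0 s h] at hs
  · have := hx (m - t) le_rfl (by omega)
    rw [sum_eq_zero fun s hs => by rw [hx0 s (by simpa using hs), mul_zero], add_zero,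
      Nat.sub_sub_self htm] at this
    simp only [mem_filter, mem_range]
    exact ⟨by omega, this.trans hat⟩
  rw [ZMod.sum_filter_eq_one_eq_sum_mul, hsum _ (by omega)]
  rcases le_or_gt ℓ t with h | h
  · rw [hx (m - ℓ) (by omega) (by omega), Nat.sub_sub_self hℓm]
  · rw [ha ℓ h, hx0 _ (by omega), zero_add]
    exact sum_eq_zero fun s hs => by rw [hx0 s (by simp at hs; omega), mul_zero]

theorem le_fMax_of_mul_pow_le {k t : ℕ} (ht : 1 ≤ t) (htk : t ≤ k) {α : Fin k → ZMod 2}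
    (hat : α ⟨t - 1, Nat.sub_one_lt_of_le ht htk⟩ = 1)
    (h0 : ∀ i : Fin k, t ≤ i.1 → α i = 0)
    {m n : ℕ} (htm : t < m) (hn : t * m ^ t ≤ n) : m ≤ fMax k n α := by
  -- `a ℓ` is the paper's `a_ℓ`, extended by `0` beyond `k`
  set a : ℕ → ZMod 2 := fun ℓ => if h : ℓ - 1 < k then α ⟨ℓ - 1, h⟩ else 0 with ha
  have ha_zero : ∀ ℓ, t < ℓ → a ℓ = 0 := fun ℓ hℓ => by
    simp only [ha]
    split_ifs with h
    · exact h0 _ (by simp; omega)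
    · rfl
  obtain ⟨S, hS, hmem, hparity⟩ := exists_choose_parity_design ht htm.le a ha_zero
  have hinj := avoiding_injective (m := m) (s := m - t)
    (hmem (by simpa [ha, dif_pos (Nat.sub_one_lt_of_le ht htk)] using hat)) (by omega) (by omega)
  have hF : IsIntersectingOn α (univ.image (avoiding (m := m) S)) :=
    isIntersectingOn_image hinj fun ℓ I hI => by
      have hIm : I.card ≤ m := by simpa using card_le_univ I
      rw [card_inf_avoiding, Nat.cast_sum, hparity _ (by omega) (by omega), hI]
      simp [ha]
  calc m = (univ.image (avoiding (m := m) S)).card := by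
        rw [card_image_of_injective _ hinj, card_univ, Fintype.card_fin]
    _ ≤ fMax k n α := card_le_fMax ((card_sizedSubsets_le S hS).trans hn) hF

theorem exists_mul_pow_le_lt {C t : ℕ} (hC : 0 < C) (ht : 0 < t) (n : ℕ) :
    ∃ m, C * m ^ t ≤ n ∧ n < C * (m + 1) ^ t := by
  have h0 : C * 0 ^ t ≤ n := by rw [zero_pow ht.ne', mul_zero]; exact n.zero_le
  refine ⟨_, Nat.findGreatest_spec (P := fun m => C * m ^ t ≤ n) n.zero_le h0,
    not_le.mp fun h => ?_⟩
  refine Nat.findGreatest_is_greatest (P := fun m => C * m ^ t ≤ n) (Nat.lt_succ_self _) ?_ h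
  calc _ ≤ (_ + 1) ^ t := Nat.le_self_pow ht.ne' _
    _ ≤ C * (_ + 1) ^ t := Nat.le_mul_of_pos_left _ hC
    _ ≤ n := h

theorem exists_pos_mul_rpow_le {f : ℕ → ℕ} {C t m₀ : ℕ} (hC : 0 < C) (ht : 0 < t)
    (hf : ∀ m n, m₀ ≤ m → C * m ^ t ≤ n → m ≤ f n) :
    ∃ c : ℝ, 0 < c ∧ ∀ᶠ n : ℕ in atTop, c * (n : ℝ) ^ ((1 : ℝ) / t) ≤ f n := by
  refine ⟨((C * 2 ^ t : ℝ)⁻¹) ^ ((1 : ℝ) / t), by positivity,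
    eventually_atTop.mpr ⟨C * (m₀ + 1) ^ t, fun n hn => ?_⟩⟩
  obtain ⟨m, hm, hnm⟩ := exists_mul_pow_le_lt hC ht n
  have hm₀ : m₀ + 1 ≤ m := by
    by_contra h
    have := Nat.mul_le_mul_left C (Nat.pow_le_pow_left (by omega : m + 1 ≤ m₀ + 1) t)
    omega
  have hn2m : n ≤ C * 2 ^ t * m ^ t :=
    calc n ≤ C * (m + 1) ^ t := hnm.le
      _ ≤ C * (2 * m) ^ t := by gcongr; omega
      _ = C * 2 ^ t * m ^ t := by ring
  calc ((C * 2 ^ t : ℝ)⁻¹) ^ ((1 : ℝ) / t) * (n : ℝ) ^ ((1 : ℝ) / t)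
      = ((C * 2 ^ t : ℝ)⁻¹ * n) ^ ((1 : ℝ) / t) :=
        (Real.mul_rpow (by positivity) (by positivity)).symm
    _ ≤ m := by
      rw [one_div, Real.rpow_inv_le_iff_of_pos (by positivity) (by positivity) (by positivity),
        Real.rpow_natCast, inv_mul_le_iff₀ (by positivity)]
      exact_mod_cast hn2m
    _ ≤ f n := by exact_mod_cast hf m n (by omega) hm

theorem stmt6 (k t : ℕ) (ht : 1 ≤ t) (htk : t ≤ k) (α : Fin k → ZMod 2)
    (hat : α ⟨t - 1, by omega⟩ = 1)
    (h0 : ∀ i : Fin k, t ≤ i.1 → α i = 0) :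
    ∃ c : ℝ, 0 < c ∧ ∀ᶠ n : ℕ in atTop,
      c * (n : ℝ) ^ ((1 : ℝ) / (t : ℝ)) ≤ (fMax k n α : ℝ) :=
  exists_pos_mul_rpow_le ht ht fun _ _ hm hn => le_fMax_of_mul_pow_le ht htk hat h0 hm hn
end

section
/- (Lower Bound Lemma) Let α_1,…,α_t ∈ F_2^k be linearly independent vectors over F_2. If there exists a constant c > 0 such that f_{α_i}(n) = Ω(n^c) for each i ∈ [t], then for every α in the F_2-linear span ⟨α_1,…,α_t⟩ we have f_α(n) = Ω(n^c). -/
open Filter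

/-!
The vectors `α` with `f_α(n) = Ω(n^c)` form an `F₂`-subspace. Given a `β`-intersecting and a
`γ`-intersecting family of the same size on `[p]` and `[q]`, pair their members up and place each
pair on disjoint parts of `[p + q]`: intersections are then computed blockwise and their sizes
add, so the result is `(β + γ)`-intersecting and `f_{β+γ}(n) ≥ min (f_β ⌊n/2⌋) (f_γ ⌊n/2⌋)`.
Placing every subset of `[⌊n/2⌋]` beside a copy of itself makes all intersections even, so
`f_0(n) ≥ 2^⌊n/2⌋`.
-/

open Finset Function

section Glue

variable {α β γ : Type*} (e : α ⊕ β ↪ γ)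

def glue (s : Finset α) (t : Finset β) : Finset γ :=
  (s.disjSum t).map e

lemma card_glue (s : Finset α) (t : Finset β) : #(glue e s t) = #s + #t := by
  rw [glue, card_map, card_disjSum]

lemma glue_inj {s s' : Finset α} {t t' : Finset β} :
    glue e s t = glue e s' t' ↔ s = s' ∧ t = t' := by
  rw [glue, glue, Finset.map_inj, disjSum_inj]

variable [DecidableEq α] [DecidableEq β] [DecidableEq γ]

lemma glue_inter (s s' : Finset α) (t t' : Finset β) :
    glue e s t ∩ glue e s' t' = glue e (s ∩ s') (t ∩ t') := by
  rw [glue, glue, glue, ← map_inter]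
  congr 1
  ext (x | x) <;> simp

lemma inf_glue [Fintype α] [Fintype β] [Fintype γ] {ι : Type*} {L : Finset ι} (hL : L.Nonempty)
    (f : ι → Finset α) (g : ι → Finset β) :
    L.inf (fun l => glue e (f l) (g l)) = glue e (L.inf f) (L.inf g) := by
  induction hL using Nonempty.cons_induction with
  | singleton l => simp
  | cons l L hl _ ih => rw [inf_cons, inf_cons, inf_cons, ih]; exact glue_inter e _ _ _ _

end Glue

def IsIntersectingFamily {κ : Type*} {k n : ℕ} (α : Fin k → ZMod 2) (f : κ → Finset (Fin n)) :
    Prop :=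
  Injective f ∧ ∀ (ℓ : Fin k) (L : Finset κ), #L = ℓ.1 + 1 → (#(L.inf f) : ZMod 2) = α ℓ

lemma bddAbove_card_isIntersecting (k n : ℕ) (α : Fin k → ZMod 2) :
    BddAbove {m | ∃ F : Finset (Finset (Fin n)), IsIntersecting k n α F ∧ #F = m} :=
  ⟨_, fun _ ⟨F, _, hF⟩ => hF ▸ card_le_univ F⟩

lemma IsIntersectingFamily.card_le_fMax {κ : Type*} [Fintype κ] {k n : ℕ} {α : Fin k → ZMod 2}
    {f : κ → Finset (Fin n)} (hf : IsIntersectingFamily α f) : Fintype.card κ ≤ fMax k n α := by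
  refine le_csSup (bddAbove_card_isIntersecting k n α)
    ⟨univ.image f, ?_, card_image_of_injective _ hf.1⟩
  intro ℓ S hS hcard
  obtain ⟨L, -, rfl⟩ := subset_image_iff.mp hS
  rw [card_image_of_injective _ hf.1] at hcard
  rw [inf_image]
  exact hf.2 ℓ L hcard

lemma exists_isIntersectingFamily_of_le_fMax {k n m : ℕ} {α : Fin k → ZMod 2}
    (h : m ≤ fMax k n α) : ∃ f : Fin m → Finset (Fin n), IsIntersectingFamily α f := by
  have hne : {j | ∃ F : Finset (Finset (Fin n)), IsIntersecting k n α F ∧ #F = j}.Nonempty :=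
    ⟨0, ∅, fun _ S hS => by simp [subset_empty.mp hS], rfl⟩
  obtain ⟨F, hF, hcard⟩ := Nat.sSup_mem hne (bddAbove_card_isIntersecting k n α)
  obtain ⟨F', hF'F, hF'⟩ := exists_subset_card_eq (h.trans_eq hcard.symm)
  let f (l : Fin m) : Finset (Fin n) := (F'.equivFinOfCardEq hF').symm l
  have hf : Injective f := Subtype.val_injective.comp (Equiv.injective _)
  refine ⟨f, hf, fun ℓ L hL => ?_⟩
  rw [← id_comp f, ← inf_image]
  refine hF ℓ _ (fun _ hx => ?_) (by rw [card_image_of_injective _ hf, hL])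
  obtain ⟨l, -, rfl⟩ := mem_image.mp hx
  exact hF'F ((F'.equivFinOfCardEq hF').symm l).2

lemma IsIntersectingFamily.glue {κ : Type*} {k p q n : ℕ} {β γ : Fin k → ZMod 2}
    {f : κ → Finset (Fin p)} {g : κ → Finset (Fin q)} (hf : IsIntersectingFamily β f)
    (hg : IsIntersectingFamily γ g) (e : Fin p ⊕ Fin q ↪ Fin n) :
    IsIntersectingFamily (β + γ) (fun l => glue e (f l) (g l)) := by
  refine ⟨fun l l' h => hf.1 ((glue_inj e).mp h).1, fun ℓ L hL => ?_⟩
  rw [inf_glue e (card_pos.mp (by omega)), card_glue, Nat.cast_add, hf.2 ℓ L hL, hg.2 ℓ L hL,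
    Pi.add_apply]

lemma isIntersectingFamily_glue_self {k p n : ℕ} (e : Fin p ⊕ Fin p ↪ Fin n) :
    IsIntersectingFamily (0 : Fin k → ZMod 2) (fun s : Finset (Fin p) => glue e s s) := by
  refine ⟨fun s s' h => ((glue_inj e).mp h).1, fun ℓ L hL => ?_⟩
  rw [inf_glue e (card_pos.mp (by omega)), card_glue, Nat.cast_add, CharTwo.add_self_eq_zero,
    Pi.zero_apply]

def finSumFinEmbedding {p q n : ℕ} (h : p + q ≤ n) : Fin p ⊕ Fin q ↪ Fin n :=
  finSumFinEquiv.toEmbedding.trans (Fin.castLEEmb h)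

lemma min_fMax_le_fMax_add {k p q n : ℕ} {β γ : Fin k → ZMod 2} (h : p + q ≤ n) :
    min (fMax k p β) (fMax k q γ) ≤ fMax k n (β + γ) := by
  obtain ⟨f, hf⟩ := exists_isIntersectingFamily_of_le_fMax (min_le_left (fMax k p β) (fMax k q γ))
  obtain ⟨g, hg⟩ := exists_isIntersectingFamily_of_le_fMax (min_le_right (fMax k p β) (fMax k q γ))
  simpa using (hf.glue hg (finSumFinEmbedding h)).card_le_fMax

lemma two_pow_le_fMax_zero {k p n : ℕ} (h : p + p ≤ n) : 2 ^ p ≤ fMax k n 0 := by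
  simpa using (isIntersectingFamily_glue_self (k := k) (finSumFinEmbedding h)).card_le_fMax

/-- `f n = Ω(n ^ c)`. -/
def HasPowLowerBound (c : ℝ) (f : ℕ → ℕ) : Prop :=
  ∃ c' : ℝ, 0 < c' ∧ ∀ᶠ n : ℕ in atTop, c' * (n : ℝ) ^ c ≤ (f n : ℝ)

namespace HasPowLowerBound

variable {c : ℝ} {f g : ℕ → ℕ}

lemma mono (hf : HasPowLowerBound c f) (hfg : ∀ n, f n ≤ g n) : HasPowLowerBound c g := by
  obtain ⟨a, ha, h⟩ := hf
  exact ⟨a, ha, h.mono fun n hn => hn.trans (Nat.cast_le.mpr (hfg n))⟩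

lemma inf (hf : HasPowLowerBound c f) (hg : HasPowLowerBound c g) :
    HasPowLowerBound c (f ⊓ g) := by
  obtain ⟨a, ha, hfa⟩ := hf
  obtain ⟨b, hb, hgb⟩ := hg
  refine ⟨min a b, lt_min ha hb, ?_⟩
  filter_upwards [hfa, hgb] with n hfn hgn
  have hpow : 0 ≤ (n : ℝ) ^ c := by positivity
  rw [Pi.inf_apply, Nat.cast_min]
  exact le_min ((mul_le_mul_of_nonneg_right (min_le_left a b) hpow).trans hfn)
    ((mul_le_mul_of_nonneg_right (min_le_right a b) hpow).trans hgn)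

lemma comp_div_two (hc : 0 ≤ c) (hf : HasPowLowerBound c f) :
    HasPowLowerBound c (fun n => f (n / 2)) := by
  obtain ⟨a, ha, h⟩ := hf
  refine ⟨a / 3 ^ c, by positivity, ?_⟩
  filter_upwards [(Nat.tendsto_div_const_atTop two_ne_zero).eventually h,
    eventually_ge_atTop 2] with n hn hn2
  have h3 : (n : ℝ) ≤ 3 * (n / 2 : ℕ) := by exact_mod_cast (by omega : n ≤ 3 * (n / 2))
  calc a / 3 ^ c * (n : ℝ) ^ c ≤ a / 3 ^ c * (3 * (n / 2 : ℕ)) ^ c := by gcongr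
    _ = a * ((n / 2 : ℕ) : ℝ) ^ c := by
      rw [Real.mul_rpow (by norm_num) (by positivity)]
      field_simp
    _ ≤ _ := hn

end HasPowLowerBound

lemma hasPowLowerBound_two_pow (c : ℝ) : HasPowLowerBound c (2 ^ ·) := by
  refine ⟨1, one_pos, ?_⟩
  have h := ((isLittleO_rpow_exp_pos_mul_atTop c (Real.log_pos one_lt_two)).comp_tendsto
    tendsto_natCast_atTop_atTop).bound one_pos
  filter_upwards [h] with n hn
  rw [comp_apply, comp_apply, one_mul, mul_comm (Real.log 2), Real.exp_nat_mul,
    Real.exp_log two_pos, Real.norm_of_nonneg (by positivity),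
    Real.norm_of_nonneg (by positivity)] at hn
  simpa using hn

lemma hasPowLowerBound_fMax_zero {c : ℝ} (hc : 0 ≤ c) (k : ℕ) :
    HasPowLowerBound c (fun n => fMax k n 0) :=
  ((hasPowLowerBound_two_pow c).comp_div_two hc).mono fun _ => two_pow_le_fMax_zero (by omega)

lemma HasPowLowerBound.fMax_add {c : ℝ} (hc : 0 ≤ c) {k : ℕ} {β γ : Fin k → ZMod 2}
    (hβ : HasPowLowerBound c (fun n => fMax k n β))
    (hγ : HasPowLowerBound c (fun n => fMax k n γ)) :
    HasPowLowerBound c (fun n => fMax k n (β + γ)) :=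
  ((hβ.inf hγ).comp_div_two hc).mono fun _ => min_fMax_le_fMax_add (by omega)

def powLowerBoundSubmodule {c : ℝ} (hc : 0 ≤ c) (k : ℕ) :
    Submodule (ZMod 2) (Fin k → ZMod 2) where
  carrier := {β | HasPowLowerBound c (fun n => fMax k n β)}
  zero_mem' := hasPowLowerBound_fMax_zero hc k
  add_mem' := HasPowLowerBound.fMax_add hc
  smul_mem' a β hβ := by
    obtain rfl | rfl : a = 0 ∨ a = 1 := by decide +revert
    · rw [zero_smul]
      exact hasPowLowerBound_fMax_zero hc k
    · rwa [one_smul]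

theorem stmt8_general (k t : ℕ) (A : Fin t → Fin k → ZMod 2)
    (c : ℝ) (hc : 0 < c)
    (hbig : ∀ i : Fin t, ∃ ci : ℝ, 0 < ci ∧ ∀ᶠ n : ℕ in atTop,
      ci * (n : ℝ) ^ c ≤ (fMax k n (A i) : ℝ))
    (α : Fin k → ZMod 2) (hα : α ∈ Submodule.span (ZMod 2) (Set.range A)) :
    ∃ c' : ℝ, 0 < c' ∧ ∀ᶠ n : ℕ in atTop,
      c' * (n : ℝ) ^ c ≤ (fMax k n α : ℝ) :=
  (Submodule.span_le (p := powLowerBoundSubmodule hc.le k)).mpr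
    (Set.range_subset_iff.mpr hbig) hα

theorem stmt8 (k t : ℕ) (A : Fin t → Fin k → ZMod 2)
    (hA : LinearIndependent (ZMod 2) A) (c : ℝ) (hc : 0 < c)
    (hbig : ∀ i : Fin t, ∃ ci : ℝ, 0 < ci ∧ ∀ᶠ n : ℕ in atTop,
      ci * (n : ℝ) ^ c ≤ (fMax k n (A i) : ℝ))
    (α : Fin k → ZMod 2) (hα : α ∈ Submodule.span (ZMod 2) (Set.range A)) :
    ∃ c' : ℝ, 0 < c' ∧ ∀ᶠ n : ℕ in atTop,
      c' * (n : ℝ) ^ c ≤ (fMax k n α : ℝ) :=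
  stmt8_general k t A c hc hbig α hα
end

section
/- Let k ≥ 2t be positive integers and let α = (a_1,…,a_k) ∈ F_2^k be such that t is the maximum index with a_t = 1 (so a_i = 0 for all t < i ≤ k). Then f_α(n) ≤ (1 + o(1))·(t!·n)^{1/t}; that is, limsup_{n→∞} f_α(n)/(t!·n)^{1/t} ≤ 1. -/
open Filter

/-!
If `F` is `α`-intersecting, then for `t`-subfamilies `T, T' ⊆ F` the set `⋂ (T ∪ T')` has odd size
exactly when `T = T'`: for `T ≠ T'` the union has between `t + 1` and `2t ≤ k` members, where `α`
vanishes. So over `𝔽₂` the incidence matrix `M` of the sets `⋂ T` satisfies `M Mᵀ = 1`, and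
comparing ranks gives `C(|F|, t) ≤ n`. Since `(m + 1 - t)ᵗ ≤ t! · C(m, t)`, this gives
`f_α(n) ≤ t - 1 + (t! n)^{1/t}`.
-/

open Finset Matrix Nat

theorem Matrix.card_le_card_of_mul_eq_one {R m n : Type*} [CommRing R] [StrongRankCondition R]
    [Fintype m] [Fintype n] [DecidableEq m] {A : Matrix m n R} {B : Matrix n m R}
    (h : A * B = 1) : Fintype.card m ≤ Fintype.card n :=
  calc Fintype.card m = (A * B).rank := by rw [h, rank_one]
    _ ≤ A.rank := rank_mul_le_left A B
    _ ≤ Fintype.card n := rank_le_card_width A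

def incidenceMatrix (R : Type*) [Zero R] [One R] {ι α : Type*} [DecidableEq α]
    (s : ι → Finset α) : Matrix ι α R :=
  Matrix.of fun i x => if x ∈ s i then 1 else 0

theorem incidenceMatrix_mul_transpose_apply {R ι α : Type*} [NonAssocSemiring R] [Fintype α]
    [DecidableEq α] (s : ι → Finset α) (i j : ι) :
    (incidenceMatrix R s * (incidenceMatrix R s)ᵀ) i j = ((s i ∩ s j).card : R) := by
  simp only [incidenceMatrix, mul_apply, transpose_apply, of_apply, mul_ite, mul_one, mul_zero,
    ← ite_and, Finset.sum_boole]
  congr 2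
  ext x
  simp [and_comm]

theorem Finset.card_lt_card_union_of_ne {α : Type*} [DecidableEq α] {s t : Finset α}
    (hst : s ≠ t) (hcard : s.card = t.card) : s.card < (s ∪ t).card := by
  refine card_lt_card (ssubset_iff_subset_ne.2 ⟨subset_union_left, fun h => hst ?_⟩)
  exact (eq_of_subset_of_card_le (subset_union_right.trans h.ge) hcard.le).symm

theorem choose_card_le_of_card_inf_parity {α : Type*} [Fintype α] [DecidableEq α]
    {t : ℕ} (F : Finset (Finset α))
    (hodd : ∀ T ⊆ F, T.card = t → ((T.inf id).card : ZMod 2) = 1)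
    (heven : ∀ S ⊆ F, t < S.card → S.card ≤ 2 * t → ((S.inf id).card : ZMod 2) = 0) :
    F.card.choose t ≤ Fintype.card α := by
  let M := incidenceMatrix (ZMod 2) fun T : F.powersetCard t => T.1.inf id
  have hM : M * Mᵀ = 1 := by
    ext ⟨T, hT⟩ ⟨T', hT'⟩
    obtain ⟨hTF, hTt⟩ := mem_powersetCard.1 hT
    obtain ⟨hT'F, hT't⟩ := mem_powersetCard.1 hT'
    rw [incidenceMatrix_mul_transpose_apply, ← inf_eq_inter, ← inf_union]
    by_cases hTT' : T = T'
    · obtain rfl := hTT'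
      simpa using hodd T hTF hTt
    · rw [one_apply_ne (by simpa using hTT')]
      refine heven _ (union_subset hTF hT'F) ?_ ?_
      · exact hTt.symm.trans_lt (card_lt_card_union_of_ne hTT' (hTt.trans hT't.symm))
      · exact (card_union_le T T').trans (by omega)
  simpa only [Fintype.card_coe, card_powersetCard] using card_le_card_of_mul_eq_one hM

theorem IsIntersecting.choose_card_le {t k n : ℕ} {α : Fin k → ZMod 2} (ht : 1 ≤ t)
    (hk : 2 * t ≤ k) (hat : α ⟨t - 1, Nat.sub_one_lt_of_le ht (by omega)⟩ = 1)
    (h0 : ∀ i : Fin k, t ≤ i.1 → α i = 0) {F : Finset (Finset (Fin n))}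
    (hF : IsIntersecting k n α F) : F.card.choose t ≤ n := by
  have hodd : ∀ T ⊆ F, T.card = t → ((T.inf id).card : ZMod 2) = 1 := fun T hT hTt =>
    hat ▸ hF _ T hT (by dsimp only; omega)
  have heven : ∀ S ⊆ F, t < S.card → S.card ≤ 2 * t → ((S.inf id).card : ZMod 2) = 0 :=
    fun S hS hlt hle => by
      rw [hF ⟨S.card - 1, by omega⟩ S hS (by dsimp only; omega)]
      exact h0 _ (by dsimp only; omega)
  simpa using choose_card_le_of_card_inf_parity F hodd heven

theorem exists_isIntersecting_card_eq_fMax (k n : ℕ) (α : Fin k → ZMod 2) :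
    ∃ F : Finset (Finset (Fin n)), IsIntersecting k n α F ∧ F.card = fMax k n α := by
  let sizes := {m | ∃ F : Finset (Finset (Fin n)), IsIntersecting k n α F ∧ F.card = m}
  have hmem : sSup sizes ∈ sizes := by
    refine Nat.sSup_mem ⟨0, ∅, fun ℓ S hS hScard => ?_, card_empty⟩ ⟨2 ^ n, ?_⟩
    · simp [subset_empty.1 hS] at hScard
    · rintro m ⟨F, -, rfl⟩
      simpa using card_le_univ F
  exact hmem

theorem Nat.cast_le_sub_one_add_rpow_of_choose_le {m t N : ℕ} (ht : 1 ≤ t) (h : m.choose t ≤ N) :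
    (m : ℝ) ≤ (t - 1 : ℝ) + ((t ! : ℝ) * N) ^ ((1 : ℝ) / t) := by
  have hpow : (m + 1 - t) ^ t ≤ t ! * N :=
    calc (m + 1 - t) ^ t ≤ m.descFactorial t := pow_sub_le_descFactorial m t
      _ = t ! * m.choose t := descFactorial_eq_factorial_mul_choose m t
      _ ≤ t ! * N := Nat.mul_le_mul_left _ h
  have hroot : ((m + 1 - t : ℕ) : ℝ) ≤ ((t ! : ℝ) * N) ^ ((1 : ℝ) / t) := by
    rw [one_div, Real.le_rpow_inv_iff_of_pos (by positivity) (by positivity) (by positivity)]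
    exact_mod_cast hpow
  have hsplit : (m : ℝ) ≤ ((m + 1 - t : ℕ) : ℝ) + (t - 1 : ℝ) := by
    rw [← Nat.cast_pred ht, ← Nat.cast_add]
    exact_mod_cast (by omega : m ≤ m + 1 - t + (t - 1))
  linarith

theorem limsup_div_le_one_of_le_const_add {ι : Type*} {l : Filter ι} [l.NeBot] {u D : ι → ℝ}
    (c : ℝ) (hu : 0 ≤ u) (hD : Tendsto D l atTop) (h : ∀ i, u i ≤ c + D i) :
    limsup (fun i => u i / D i) l ≤ 1 := by
  have hDpos : ∀ᶠ i in l, 0 < D i := hD.eventually_gt_atTop 0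
  have hlim : Tendsto (fun i => c / D i + 1) l (nhds 1) := by
    simpa using (tendsto_const_nhds.div_atTop hD).add_const (1 : ℝ)
  have hle : ∀ᶠ i in l, u i / D i ≤ c / D i + 1 := hDpos.mono fun i hi => by
    rw [div_add_one hi.ne', div_le_div_iff_of_pos_right hi]
    linarith [h i]
  have hcobdd : IsCoboundedUnder (· ≤ ·) l fun i => u i / D i :=
    isBoundedUnder_of_eventually_ge (hDpos.mono fun i hi => div_nonneg (hu i) hi.le)
      |>.isCoboundedUnder_le
  exact (limsup_le_limsup hle hcobdd hlim.isBoundedUnder_le).trans_eq hlim.limsup_eq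

theorem stmt10 (t k : ℕ) (ht : 1 ≤ t) (hk : 2 * t ≤ k) (α : Fin k → ZMod 2)
    (hat : α ⟨t - 1, by omega⟩ = 1)
    (h0 : ∀ i : Fin k, t ≤ i.1 → α i = 0) :
    limsup (fun n : ℕ => (fMax k n α : ℝ) /
      (((t.factorial : ℝ) * (n : ℝ)) ^ ((1 : ℝ) / (t : ℝ)))) atTop ≤ 1 := by
  have hroot : Tendsto (fun n : ℕ => ((t ! : ℝ) * n) ^ ((1 : ℝ) / t)) atTop atTop :=
    (tendsto_rpow_atTop (by positivity)).comp
      (tendsto_natCast_atTop_atTop.const_mul_atTop (by positivity))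
  refine limsup_div_le_one_of_le_const_add (t - 1) (fun n => Nat.cast_nonneg _) hroot fun n => ?_
  obtain ⟨F, hF, hcard⟩ := exists_isIntersecting_card_eq_fMax k n α
  exact hcard ▸ Nat.cast_le_sub_one_add_rpow_of_choose_le ht
    (hF.choose_card_le ht hk hat h0)
end
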